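/- Let d, n, n', m, p be positive integers and Σ = {1,…,d}. Let ({A_i, K_i}_{i=1}^d, C) be a dLPV-SSA of dimension n and ({A'_i, K'_i}_{i=1}^d, C') be a dLPV-SSA of dimension n', both minimal, with the same sub-Markov parameters, i.e. C A_w K_σ = C' A'_w K'_σ for all w ∈ Σ*, σ ∈ Σ. Then n = n' and there exists an invertible matrix T ∈ ℝ^{n×n} such that A'_i = T A_i T^{−1} and K'_i = T K_i for all i ∈ Σ, and C' = C T^{−1}. -/

import Mathlib

open Matrix

/-- Word product `M_w = M_{σ_k} ⋯ M_{σ_1}` for a word `w = σ_1 ⋯ σ_k`,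
represented as a list `[σ_1, …, σ_k]`; `M_ε = 1`. -/
noncomputable def wordProd {d : ℕ} {ι : Type} [Fintype ι] [DecidableEq ι]
    (A : Fin d → Matrix ι ι ℝ) : List (Fin d) → Matrix ι ι ℝ
  | [] => 1
  | σ :: s => wordProd A s * A σ

/-- A dLPV-SSA `({A_i, K_i}, C)` of dimension `n` is minimal if every dLPV-SSA of any
dimension `n'` with the same sub-Markov parameters `C A_w K_σ` satisfies `n' ≥ n`. -/
def IsMinimal (d m p n : ℕ)
    (A : Fin d → Matrix (Fin n) (Fin n) ℝ)
    (K : Fin d → Matrix (Fin n) (Fin m) ℝ)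
    (C : Matrix (Fin p) (Fin n) ℝ) : Prop :=
  ∀ (n' : ℕ) (A' : Fin d → Matrix (Fin n') (Fin n') ℝ)
    (K' : Fin d → Matrix (Fin n') (Fin m) ℝ) (C' : Matrix (Fin p) (Fin n') ℝ),
    (∀ (w : List (Fin d)) (σ : Fin d),
      C' * wordProd A' w * K' σ = C * wordProd A w * K σ) → n ≤ n'

lemma wordProd_nil {d : ℕ} {ι : Type} [Fintype ι] [DecidableEq ι]
    (A : Fin d → Matrix ι ι ℝ) : wordProd A [] = 1 := rfl

lemma wordProd_cons {d : ℕ} {ι : Type} [Fintype ι] [DecidableEq ι]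
    (A : Fin d → Matrix ι ι ℝ) (σ : Fin d) (s : List (Fin d)) :
    wordProd A (σ :: s) = wordProd A s * A σ := rfl

lemma wordProd_append {d : ℕ} {ι : Type} [Fintype ι] [DecidableEq ι]
    (A : Fin d → Matrix ι ι ℝ) (w v : List (Fin d)) :
    wordProd A (w ++ v) = wordProd A v * wordProd A w := by
  induction w with
  | nil => simp [wordProd_nil, wordProd]
  | cons σ s ih => simp [wordProd_cons, ih, Matrix.mul_assoc]

lemma mulVec_col {a b c : Type} [Fintype b] (M : Matrix a b ℝ) (N : Matrix b c ℝ) (j : c) :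
    M *ᵥ Nᵀ j = (M * N)ᵀ j := by
  ext i
  simp [Matrix.mulVec, dotProduct, Matrix.mul_apply, Matrix.transpose_apply]

lemma mulVecLin_toMatrix' {k l : ℕ} (f : (Fin k → ℝ) →ₗ[ℝ] (Fin l → ℝ)) :
    (LinearMap.toMatrix' f).mulVecLin = f := Matrix.toLin'_toMatrix' f

lemma mulVecLin_inj {k l : ℕ} {M N : Matrix (Fin k) (Fin l) ℝ}
    (h : M.mulVecLin = N.mulVecLin) : M = N := Matrix.toLin'.injective h

/-- The generating family for the reachability space. -/
noncomputable def gen {d n m : ℕ} (A : Fin d → Matrix (Fin n) (Fin n) ℝ)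
    (K : Fin d → Matrix (Fin n) (Fin m) ℝ) :
    List (Fin d) × Fin d × Fin m → (Fin n → ℝ) :=
  fun x => (wordProd A x.1 * K x.2.1)ᵀ x.2.2

lemma reach_top {d n m p : ℕ}
    (A : Fin d → Matrix (Fin n) (Fin n) ℝ)
    (K : Fin d → Matrix (Fin n) (Fin m) ℝ)
    (C : Matrix (Fin p) (Fin n) ℝ)
    (hmin : IsMinimal d m p n A K C) :
    Submodule.span ℝ (Set.range (gen A K)) = ⊤ := by
  set R := Submodule.span ℝ (Set.range (gen A K)) with hR
  have hAinv : ∀ i : Fin d, ∀ x ∈ R, (A i).mulVecLin x ∈ R := by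
    intro i x hx
    have : Submodule.map ((A i).mulVecLin) R ≤ R := by
      rw [hR, Submodule.map_span]
      apply Submodule.span_mono
      rintro y ⟨z, ⟨⟨w, σ, j⟩, rfl⟩, rfl⟩
      refine ⟨(w ++ [i], σ, j), ?_⟩
      simp only [gen, Matrix.mulVecLin_apply, mulVec_col, wordProd_append]
      rw [wordProd_cons, wordProd_nil, Matrix.one_mul, Matrix.mul_assoc]
    exact this ⟨x, hx, rfl⟩
  have hKmem : ∀ (σ : Fin d) (u : Fin m → ℝ), (K σ).mulVecLin u ∈ R := by
    intro σ u
    have h1 : LinearMap.range (K σ).mulVecLin ≤ R := by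
      rw [Matrix.range_mulVecLin, hR]
      apply Submodule.span_mono
      rintro y ⟨j, rfl⟩
      exact ⟨([], σ, j), by simp [gen, wordProd_nil]; rfl⟩
    exact h1 ⟨u, rfl⟩
  set r := Module.finrank ℝ R with hr
  have hrn : r ≤ n := by
    simpa using Submodule.finrank_le R
  set b : Module.Basis (Fin r) ℝ R := Module.finBasis ℝ R with hb
  set e : R ≃ₗ[ℝ] (Fin r → ℝ) := b.equivFun with he
  set J : (Fin r → ℝ) →ₗ[ℝ] (Fin n → ℝ) := R.subtype ∘ₗ (e.symm : (Fin r → ℝ) →ₗ[ℝ] R) with hJ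
  set Ar : Fin d → (R →ₗ[ℝ] R) := fun i => LinearMap.restrict ((A i).mulVecLin) (hAinv i) with hAr
  set A2 : Fin d → Matrix (Fin r) (Fin r) ℝ :=
    fun i => LinearMap.toMatrix' ((e : R →ₗ[ℝ] (Fin r → ℝ)) ∘ₗ Ar i ∘ₗ (e.symm : (Fin r → ℝ) →ₗ[ℝ] R)) with hA2
  set K2 : Fin d → Matrix (Fin r) (Fin m) ℝ :=
    fun σ => LinearMap.toMatrix' ((e : R →ₗ[ℝ] (Fin r → ℝ)) ∘ₗ LinearMap.codRestrict R ((K σ).mulVecLin) (hKmem σ)) with hK2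
  set C2 : Matrix (Fin p) (Fin r) ℝ := LinearMap.toMatrix' (C.mulVecLin ∘ₗ J) with hC2
  have hcomm : ∀ i, (A i).mulVecLin ∘ₗ J = J ∘ₗ (A2 i).mulVecLin := by
    intro i
    rw [hA2]
    simp only [mulVecLin_toMatrix']
    ext u
    simp [hJ, hAr, LinearMap.restrict_apply]
  have hword : ∀ w, (wordProd A w).mulVecLin ∘ₗ J = J ∘ₗ (wordProd A2 w).mulVecLin := by
    intro w
    induction w with
    | nil => rw [wordProd_nil, wordProd_nil, Matrix.mulVecLin_one, Matrix.mulVecLin_one]; ext u; simp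
    | cons σ s ih =>
      rw [wordProd_cons, wordProd_cons, Matrix.mulVecLin_mul, Matrix.mulVecLin_mul,
        LinearMap.comp_assoc, hcomm σ, ← LinearMap.comp_assoc, ih, LinearMap.comp_assoc]
  have hJe : ∀ y : R, J (e y) = (y : Fin n → ℝ) := by
    intro y; simp [hJ]
  have hmark : ∀ (w : List (Fin d)) (σ : Fin d),
      C2 * wordProd A2 w * K2 σ = C * wordProd A w * K σ := by
    intro w σ
    apply mulVecLin_inj
    apply LinearMap.ext
    intro u
    have f1 : (K2 σ).mulVecLin u = e (⟨(K σ).mulVecLin u, hKmem σ u⟩ : R) := by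
      rw [hK2]; simp only [mulVecLin_toMatrix']; rfl
    have f2 : ∀ x, J ((wordProd A2 w).mulVecLin x) = (wordProd A w).mulVecLin (J x) := by
      intro x
      exact (LinearMap.congr_fun (hword w) x).symm
    have f3 : ∀ x, C2.mulVecLin x = C.mulVecLin (J x) := by
      intro x; rw [hC2]; simp only [mulVecLin_toMatrix']; rfl
    have lhs : (C2 * wordProd A2 w * K2 σ).mulVecLin u
        = C2.mulVecLin ((wordProd A2 w).mulVecLin ((K2 σ).mulVecLin u)) := by
      rw [Matrix.mulVecLin_mul, Matrix.mulVecLin_mul]; rfl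
    have rhs : (C * wordProd A w * K σ).mulVecLin u
        = C.mulVecLin ((wordProd A w).mulVecLin ((K σ).mulVecLin u)) := by
      rw [Matrix.mulVecLin_mul, Matrix.mulVecLin_mul]; rfl
    rw [lhs, rhs, f1, f3, f2]
    have : J (e (⟨(K σ).mulVecLin u, hKmem σ u⟩ : R)) = (K σ).mulVecLin u := hJe _
    rw [this]
  have hnr : n ≤ r := hmin r A2 K2 C2 hmark
  have : r = n := le_antisymm hrn hnr
  exact Submodule.eq_top_of_finrank_eq (by simpa using this)

lemma obs_bot {d n m p : ℕ}
    (A : Fin d → Matrix (Fin n) (Fin n) ℝ)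
    (K : Fin d → Matrix (Fin n) (Fin m) ℝ)
    (C : Matrix (Fin p) (Fin n) ℝ)
    (hmin : IsMinimal d m p n A K C) :
    (⨅ w : List (Fin d), LinearMap.ker ((C * wordProd A w).mulVecLin)) = ⊥ := by
  set O := ⨅ w : List (Fin d), LinearMap.ker ((C * wordProd A w).mulVecLin) with hO
  have memO : ∀ x, x ∈ O ↔ ∀ w, (C * wordProd A w).mulVecLin x = 0 := by
    intro x
    simp [hO, Submodule.mem_iInf, LinearMap.mem_ker]
  have hinv : ∀ i : Fin d, O ≤ O.comap ((A i).mulVecLin) := by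
    intro i x hx
    rw [Submodule.mem_comap, memO]
    intro w
    have := (memO x).mp hx (i :: w)
    rw [wordProd_cons] at this
    calc (C * wordProd A w).mulVecLin ((A i).mulVecLin x)
        = (C * wordProd A w * A i).mulVecLin x := by
          rw [Matrix.mulVecLin_mul (C * wordProd A w) (A i)]; rfl
      _ = (C * (wordProd A w * A i)).mulVecLin x := by rw [Matrix.mul_assoc]
      _ = 0 := this
  have hCker : O ≤ LinearMap.ker C.mulVecLin := by
    intro x hx
    have := (memO x).mp hx []
    rw [wordProd_nil, Matrix.mul_one] at this
    exact this
  set q := Module.finrank ℝ ((Fin n → ℝ) ⧸ O) with hq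
  have hqn : q ≤ n := by
    simpa using Submodule.finrank_quotient_le O
  set b2 : Module.Basis (Fin q) ℝ ((Fin n → ℝ) ⧸ O) := Module.finBasis ℝ ((Fin n → ℝ) ⧸ O) with hb2
  set e2 : ((Fin n → ℝ) ⧸ O) ≃ₗ[ℝ] (Fin q → ℝ) := b2.equivFun with he2
  set π : (Fin n → ℝ) →ₗ[ℝ] (Fin q → ℝ) := (e2 : ((Fin n → ℝ) ⧸ O) →ₗ[ℝ] (Fin q → ℝ)) ∘ₗ O.mkQ with hπ
  set A3 : Fin d → Matrix (Fin q) (Fin q) ℝ := fun i =>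
    LinearMap.toMatrix' ((e2 : ((Fin n → ℝ) ⧸ O) →ₗ[ℝ] (Fin q → ℝ)) ∘ₗ Submodule.mapQ O O ((A i).mulVecLin) (hinv i)
      ∘ₗ (e2.symm : (Fin q → ℝ) →ₗ[ℝ] ((Fin n → ℝ) ⧸ O))) with hA3
  set K3 : Fin d → Matrix (Fin q) (Fin m) ℝ := fun σ =>
    LinearMap.toMatrix' (π ∘ₗ (K σ).mulVecLin) with hK3
  set C3 : Matrix (Fin p) (Fin q) ℝ :=
    LinearMap.toMatrix' (O.liftQ C.mulVecLin hCker ∘ₗ (e2.symm : (Fin q → ℝ) →ₗ[ℝ] ((Fin n → ℝ) ⧸ O))) with hC3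
  have hcomm : ∀ i, (A3 i).mulVecLin ∘ₗ π = π ∘ₗ (A i).mulVecLin := by
    intro i
    rw [hA3]
    simp only [mulVecLin_toMatrix']
    apply LinearMap.ext
    intro x
    simp only [hπ, LinearMap.comp_apply, LinearEquiv.coe_coe, LinearEquiv.symm_apply_apply]
    rw [Submodule.mkQ_apply, Submodule.mapQ_apply, Submodule.mkQ_apply]
  have hword : ∀ w, (wordProd A3 w).mulVecLin ∘ₗ π = π ∘ₗ (wordProd A w).mulVecLin := by
    intro w
    induction w with
    | nil => rw [wordProd_nil, wordProd_nil, Matrix.mulVecLin_one, Matrix.mulVecLin_one]; ext u; simp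
    | cons σ s ih =>
      rw [wordProd_cons, wordProd_cons, Matrix.mulVecLin_mul, Matrix.mulVecLin_mul,
        LinearMap.comp_assoc, hcomm σ, ← LinearMap.comp_assoc, ih, LinearMap.comp_assoc]
  have hC3π : C3.mulVecLin ∘ₗ π = C.mulVecLin := by
    rw [hC3]
    simp only [mulVecLin_toMatrix']
    apply LinearMap.ext
    intro x
    simp only [hπ, LinearMap.comp_apply, LinearEquiv.coe_coe, LinearEquiv.symm_apply_apply]
    exact Submodule.liftQ_apply O C.mulVecLin x
  have hmark : ∀ (w : List (Fin d)) (σ : Fin d),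
      C3 * wordProd A3 w * K3 σ = C * wordProd A w * K σ := by
    intro w σ
    apply mulVecLin_inj
    apply LinearMap.ext
    intro u
    have lhs : (C3 * wordProd A3 w * K3 σ).mulVecLin u
        = C3.mulVecLin ((wordProd A3 w).mulVecLin ((K3 σ).mulVecLin u)) := by
      rw [Matrix.mulVecLin_mul, Matrix.mulVecLin_mul]; rfl
    have rhs : (C * wordProd A w * K σ).mulVecLin u
        = C.mulVecLin ((wordProd A w).mulVecLin ((K σ).mulVecLin u)) := by
      rw [Matrix.mulVecLin_mul, Matrix.mulVecLin_mul]; rfl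
    have f1 : (K3 σ).mulVecLin u = π ((K σ).mulVecLin u) := by
      rw [hK3]; simp only [mulVecLin_toMatrix']; rfl
    have f2 : (wordProd A3 w).mulVecLin (π ((K σ).mulVecLin u))
        = π ((wordProd A w).mulVecLin ((K σ).mulVecLin u)) :=
      LinearMap.congr_fun (hword w) _
    have f3 : C3.mulVecLin (π ((wordProd A w).mulVecLin ((K σ).mulVecLin u)))
        = C.mulVecLin ((wordProd A w).mulVecLin ((K σ).mulVecLin u)) :=
      LinearMap.congr_fun hC3π _
    rw [lhs, rhs, f1, f2, f3]
  have hnq : n ≤ q := hmin q A3 K3 C3 hmark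
  have hqe : q = n := le_antisymm hqn hnq
  have hfr : Module.finrank ℝ O = 0 := by
    have h2 : q + Module.finrank ℝ O = n := by
      rw [hq]
      have h3 := Submodule.finrank_quotient_add_finrank O
      simpa using h3
    omega
  exact Submodule.finrank_eq_zero.mp hfr



/- The invertible matrix `T ∈ ℝ^{n'×n}` together with its two-sided inverse
`T' = T⁻¹ ∈ ℝ^{n×n'}` realizes the isomorphism `A'_i = T A_i T⁻¹`, `K'_i = T K_i`,
`C' = C T⁻¹`. -/
theorem stmt12 (d n n' m p : ℕ)
    (hd : 0 < d) (hn : 0 < n) (hn' : 0 < n') (hm : 0 < m) (hpp : 0 < p)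
    (A : Fin d → Matrix (Fin n) (Fin n) ℝ)
    (K : Fin d → Matrix (Fin n) (Fin m) ℝ)
    (C : Matrix (Fin p) (Fin n) ℝ)
    (A' : Fin d → Matrix (Fin n') (Fin n') ℝ)
    (K' : Fin d → Matrix (Fin n') (Fin m) ℝ)
    (C' : Matrix (Fin p) (Fin n') ℝ)
    (hsame : ∀ (w : List (Fin d)) (σ : Fin d),
      C * wordProd A w * K σ = C' * wordProd A' w * K' σ)
    (hmin : IsMinimal d m p n A K C)
    (hmin' : IsMinimal d m p n' A' K' C') :
    n = n' ∧
    ∃ (T : Matrix (Fin n') (Fin n) ℝ) (T' : Matrix (Fin n) (Fin n') ℝ),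
      T * T' = 1 ∧ T' * T = 1 ∧
      (∀ i, A' i = T * A i * T') ∧ (∀ i, K' i = T * K i) ∧ C' = C * T' := by
  have h1 : n ≤ n' := hmin n' A' K' C' (fun w σ => (hsame w σ).symm)
  have h2 : n' ≤ n := hmin' n A K C (fun w σ => hsame w σ)
  obtain rfl : n = n' := le_antisymm h1 h2
  refine ⟨rfl, ?_⟩
  have hRtop : Submodule.span ℝ (Set.range (gen A K)) = ⊤ := reach_top A K C hmin
  have hRtop' : Submodule.span ℝ (Set.range (gen A' K')) = ⊤ := reach_top A' K' C' hmin'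
  have hObot := obs_bot A K C hmin
  have hObot' := obs_bot A' K' C' hmin'
  set H : (Fin n → ℝ) →ₗ[ℝ] (List (Fin d) → Fin p → ℝ) :=
    LinearMap.pi (fun w => (C * wordProd A w).mulVecLin) with hH
  set H' : (Fin n → ℝ) →ₗ[ℝ] (List (Fin d) → Fin p → ℝ) :=
    LinearMap.pi (fun w => (C' * wordProd A' w).mulVecLin) with hH'
  have hHinj : Function.Injective H := by
    rw [← LinearMap.ker_eq_bot, hH, LinearMap.ker_pi]
    exact hObot
  have hH'inj : Function.Injective H' := by
    rw [← LinearMap.ker_eq_bot, hH', LinearMap.ker_pi]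
    exact hObot'
  have keyassoc : ∀ (N : ℕ) (Aa : Fin d → Matrix (Fin N) (Fin N) ℝ)
      (Ka : Fin d → Matrix (Fin N) (Fin m) ℝ) (Ca : Matrix (Fin p) (Fin N) ℝ)
      (w v : List (Fin d)) (σ : Fin d),
      Ca * wordProd Aa v * (wordProd Aa w * Ka σ) = Ca * wordProd Aa (w ++ v) * Ka σ := by
    intro N Aa Ka Ca w v σ
    simp only [wordProd_append, Matrix.mul_assoc]
  have hHgen : ∀ x, H (gen A K x) = H' (gen A' K' x) := by
    rintro ⟨w, σ, j⟩
    funext v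
    show (C * wordProd A v).mulVecLin ((wordProd A w * K σ)ᵀ j)
        = (C' * wordProd A' v).mulVecLin ((wordProd A' w * K' σ)ᵀ j)
    simp only [Matrix.mulVecLin_apply, mulVec_col]
    rw [keyassoc n A K C w v σ, keyassoc n A' K' C' w v σ, hsame (w ++ v) σ]
  have hrange : LinearMap.range H = LinearMap.range H' := by
    rw [← Submodule.map_top, ← hRtop, Submodule.map_span,
        ← Submodule.map_top, ← hRtop', Submodule.map_span,
        ← Set.range_comp, ← Set.range_comp]
    congr 1
    exact congrArg Set.range (funext hHgen)
  set e : (Fin n → ℝ) ≃ₗ[ℝ] (Fin n → ℝ) :=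
    (LinearEquiv.ofInjective H hHinj).trans
      ((LinearEquiv.ofEq _ _ hrange).trans (LinearEquiv.ofInjective H' hH'inj).symm) with he
  have hHe : ∀ x, H' (e x) = H x := by
    intro x
    have step : ∀ y : LinearMap.range H', H' ((LinearEquiv.ofInjective H' hH'inj).symm y) = ↑y := by
      intro y
      rw [← LinearEquiv.ofInjective_apply H' (h := hH'inj), LinearEquiv.apply_symm_apply]
    rw [he]
    simp only [LinearEquiv.trans_apply]
    rw [step]
    simp [LinearEquiv.ofInjective_apply]
  have hshift : ∀ (i : Fin d) (x : Fin n → ℝ) (v : List (Fin d)),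
      H ((A i).mulVecLin x) v = H x (i :: v) := by
    intro i x v
    show (C * wordProd A v).mulVecLin ((A i).mulVecLin x) = (C * wordProd A (i :: v)).mulVecLin x
    rw [wordProd_cons, ← Matrix.mul_assoc, Matrix.mulVecLin_mul (C * wordProd A v) (A i)]
    rfl
  have hshift' : ∀ (i : Fin d) (x : Fin n → ℝ) (v : List (Fin d)),
      H' ((A' i).mulVecLin x) v = H' x (i :: v) := by
    intro i x v
    show (C' * wordProd A' v).mulVecLin ((A' i).mulVecLin x) = (C' * wordProd A' (i :: v)).mulVecLin x
    rw [wordProd_cons, ← Matrix.mul_assoc, Matrix.mulVecLin_mul (C' * wordProd A' v) (A' i)]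
    rfl
  have hA : ∀ (i : Fin d) (x : Fin n → ℝ), e ((A i).mulVecLin x) = (A' i).mulVecLin (e x) := by
    intro i x
    apply hH'inj
    rw [hHe]
    funext v
    rw [hshift, hshift', ← hHe x]
  have hK : ∀ (σ : Fin d) (u : Fin m → ℝ), e ((K σ).mulVecLin u) = (K' σ).mulVecLin u := by
    intro σ u
    apply hH'inj
    rw [hHe]
    funext v
    show (C * wordProd A v).mulVecLin ((K σ).mulVecLin u)
        = (C' * wordProd A' v).mulVecLin ((K' σ).mulVecLin u)
    rw [← LinearMap.comp_apply, ← LinearMap.comp_apply,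
      ← Matrix.mulVecLin_mul, ← Matrix.mulVecLin_mul, hsame v σ]
  have hC : ∀ x : Fin n → ℝ, C.mulVecLin x = C'.mulVecLin (e x) := by
    intro x
    have := congrFun (hHe x) []
    show C.mulVecLin x = C'.mulVecLin (e x)
    have l1 : H x [] = (C * wordProd A []).mulVecLin x := rfl
    have l2 : H' (e x) [] = (C' * wordProd A' []).mulVecLin (e x) := rfl
    rw [wordProd_nil, Matrix.mul_one] at l1 l2
    rw [← l1, ← l2, this]
  -- matrices
  refine ⟨LinearMap.toMatrix' (e : (Fin n → ℝ) →ₗ[ℝ] (Fin n → ℝ)),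
    LinearMap.toMatrix' (e.symm : (Fin n → ℝ) →ₗ[ℝ] (Fin n → ℝ)), ?_, ?_, ?_, ?_, ?_⟩
  · rw [← LinearMap.toMatrix'_comp]
    have : (e : (Fin n → ℝ) →ₗ[ℝ] (Fin n → ℝ)) ∘ₗ (e.symm : (Fin n → ℝ) →ₗ[ℝ] (Fin n → ℝ))
        = LinearMap.id := by ext x; simp
    rw [this, LinearMap.toMatrix'_id]
  · rw [← LinearMap.toMatrix'_comp]
    have : (e.symm : (Fin n → ℝ) →ₗ[ℝ] (Fin n → ℝ)) ∘ₗ (e : (Fin n → ℝ) →ₗ[ℝ] (Fin n → ℝ))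
        = LinearMap.id := by ext x; simp
    rw [this, LinearMap.toMatrix'_id]
  · intro i
    apply mulVecLin_inj
    rw [Matrix.mulVecLin_mul, Matrix.mulVecLin_mul]
    simp only [mulVecLin_toMatrix']
    apply LinearMap.ext
    intro x
    simp only [LinearMap.comp_apply, LinearEquiv.coe_coe]
    rw [hA i (e.symm x), LinearEquiv.apply_symm_apply]
  · intro σ
    apply mulVecLin_inj
    rw [Matrix.mulVecLin_mul]
    simp only [mulVecLin_toMatrix']
    apply LinearMap.ext
    intro u
    simp only [LinearMap.comp_apply, LinearEquiv.coe_coe]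
    exact (hK σ u).symm
  · apply mulVecLin_inj
    rw [Matrix.mulVecLin_mul]
    simp only [mulVecLin_toMatrix']
    apply LinearMap.ext
    intro x
    simp only [LinearMap.comp_apply, LinearEquiv.coe_coe]
    rw [hC (e.symm x), LinearEquiv.apply_symm_apply]
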